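/- A Hausdorff topological space X is developable at non-isolated points if and only if X has a pair-network 𝒫 = ⋃_{n∈ℕ} 𝒫_n satisfying: (i) for every n, ℐ_Δ(X) ⊆ 𝒫_n and P′ ⊆ X^d for every pair (P′, P″) ∈ 𝒫_n \ ℐ_Δ(X); (ii) for every n, the family 𝒫_n′|_{X^d} consists of sets closed in X^d and is hereditarily closure-preserving in X^d; (iii) for every x ∈ U with U open in X, there exists m with x ∈ st°(x, 𝒫_m) ⊆ U. -/

import Mathlib

open Set Topology Filter Function

/-- `st(x, 𝒰) = ⋃ {P ∈ 𝒰 : x ∈ P}`. -/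
def stpt {X : Type*} (x : X) (𝒰 : Set (Set X)) : Set X := ⋃₀ {P ∈ 𝒰 | x ∈ P}

/-- The set `X^d` of non-isolated points of `X`. -/
def nonIsolatedPoints (X : Type*) [TopologicalSpace X] : Set X :=
  {x : X | ¬IsOpen ({x} : Set X)}

/-- A development at non-isolated points: a sequence of open covers of `X` such that
the stars at each non-isolated point form a neighborhood base there. -/
def IsDevelopmentAtNonIsolatedPoints {X : Type*} [TopologicalSpace X]
    (𝒰 : ℕ → Set (Set X)) : Prop :=
  (∀ n, ∀ P ∈ 𝒰 n, IsOpen P) ∧ (∀ n, ⋃₀ 𝒰 n = Set.univ) ∧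
    ∀ x ∈ nonIsolatedPoints X, ∀ U : Set X, x ∈ U → IsOpen U →
      ∃ n, stpt x (𝒰 n) ⊆ U

/-- A quasi-development for `X`. -/
def IsQuasiDevelopment {X : Type*} [TopologicalSpace X] (𝒰 : ℕ → Set (Set X)) : Prop :=
  (∀ n, ∀ P ∈ 𝒰 n, IsOpen P) ∧
    ∀ (x : X) (U : Set X), x ∈ U → IsOpen U →
      ∃ n, x ∈ stpt x (𝒰 n) ∧ stpt x (𝒰 n) ⊆ U

/-- A `g`-function for `X`. -/
def IsGFunction {X : Type*} [TopologicalSpace X] (g : ℕ → X → Set X) : Prop :=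
  (∀ n x, IsOpen (g n x)) ∧ (∀ n x, x ∈ g n x) ∧ ∀ n x, g (n + 1) x ⊆ g n x

/-- `st(x, 𝒰)` for a pair-family `𝒰`. -/
def pairSt {X : Type*} (x : X) (𝒰 : Set (Set X × Set X)) : Set X :=
  ⋃₀ {S | ∃ P ∈ 𝒰, x ∈ P.1 ∧ S = P.2}

/-- `st(A, 𝒰)` for a pair-family `𝒰`. -/
def pairStSet {X : Type*} (A : Set X) (𝒰 : Set (Set X × Set X)) : Set X :=
  ⋃₀ {S | ∃ P ∈ 𝒰, (A ∩ P.1).Nonempty ∧ S = P.2}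

/-- A pair-network for `X`. -/
def IsPairNetwork {X : Type*} [TopologicalSpace X] (𝒰 : Set (Set X × Set X)) : Prop :=
  (∀ P ∈ 𝒰, P.1 ⊆ P.2) ∧
    ∀ (x : X) (U : Set X), x ∈ U → IsOpen U → ∃ P ∈ 𝒰, x ∈ P.1 ∧ P.2 ⊆ U

/-- `𝒰′|_D = {P′ ∩ D : P ∈ 𝒰}`. -/
def firstCoordRestrict {X : Type*} (𝒰 : Set (Set X × Set X)) (D : Set X) : Set (Set X) :=
  (fun P : Set X × Set X => P.1 ∩ D) '' 𝒰

/-- A family of subsets of `X` consists of sets closed in the subspace `D` and is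
locally finite in the subspace `D`. -/
def IsClosedLocallyFiniteIn {X : Type*} [TopologicalSpace X]
    (ℱ : Set (Set X)) (D : Set X) : Prop :=
  (∀ S ∈ ℱ, IsClosed {z : ↥D | (z : X) ∈ S}) ∧
    ∀ z : ↥D, ∃ V : Set X, IsOpen V ∧ (z : X) ∈ V ∧ {S ∈ ℱ | (S ∩ V).Nonempty}.Finite

/-- `ℐ_Δ(X) = {({x}, {x}) : x isolated in X}`. -/
def pairDiag (X : Type*) [TopologicalSpace X] : Set (Set X × Set X) :=
  {P | ∃ x : X, IsOpen ({x} : Set X) ∧ P = (({x} : Set X), ({x} : Set X))}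

/-- A family of subsets of `X`, all contained in `D`, is hereditarily
closure-preserving in the subspace `D` (closures in `D` are expressed as ambient
closures intersected with `D`). -/
def IsHereditarilyClosurePreservingIn {X : Type*} [TopologicalSpace X]
    (ℱ : Set (Set X)) (D : Set X) : Prop :=
  ∀ H : Set X → Set X, (∀ S ∈ ℱ, H S ⊆ S) →
    closure (⋃ S ∈ ℱ, H S) ∩ D = ⋃ S ∈ ℱ, (closure (H S) ∩ D)

/-!
Forward direction: well-order `Set X`. For a development `(𝒰 n)` and `V ∈ 𝒰 n`, take the
non-isolated points whose `𝒰 m`-star lies in `V` and which lie in no earlier member of `𝒰 n`.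
These pieces are closed, and if `V₀` is the first member of `𝒰 n` containing a non-isolated
point `z` and `z ∈ W ∈ 𝒰 m`, then `V₀ ∩ W` meets only the piece of `V₀`. So for each `(n, m)`
the pieces form a locally finite, hence hereditarily closure-preserving, family; paired with
their `V` and with the pairs `({x}, {x})` for isolated `x` they give the pair-network, and the
star of a point of the piece of `V` is `V` itself.

Backward direction: hereditary closure-preservation makes the union of the members of
`𝒫ₙ′|X^d` that miss `x` closed, so `Oₙ(x)`, the set of points lying only in members that
contain `x`, is an open neighbourhood of `x`. Let `gₙ(x) = ⋂_{i ≤ n} Oᵢ(x) ∩ st°(x, 𝒫ᵢ)`, the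
second factor taken only when it contains `x`. Given `z ∈ X^d` and `U`, choose `m` with
`z ∈ st°(z, 𝒫ₘ) ⊆ U` and a pair in some `𝒫ₖ` with `z ∈ P′ ⊆ P″ ⊆ st°(z, 𝒫ₘ) ∩ Oₘ(z)`.
If `z ∈ gₙ(x)` with `n ≥ m, k`, then `x ∈ P′`, so `x` and `z` lie in the same members of
`𝒫ₘ′|X^d`; hence `st(x, 𝒫ₘ) = st(z, 𝒫ₘ)` and `gₙ(x) ⊆ st°(z, 𝒫ₘ) ⊆ U`.
-/
section General

variable {X : Type*}

lemma mem_stpt {x w : X} {𝒰 : Set (Set X)} : w ∈ stpt x 𝒰 ↔ ∃ W ∈ 𝒰, x ∈ W ∧ w ∈ W := by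
  simp [stpt, and_assoc]

lemma mem_pairSt {x w : X} {𝒩 : Set (Set X × Set X)} :
    w ∈ pairSt x 𝒩 ↔ ∃ P ∈ 𝒩, x ∈ P.1 ∧ w ∈ P.2 := by
  constructor
  · rintro ⟨_, ⟨P, hP, hx, rfl⟩, hw⟩
    exact ⟨P, hP, hx, hw⟩
  · rintro ⟨P, hP, hx, hw⟩
    exact ⟨P.2, ⟨P, hP, hx, rfl⟩, hw⟩

lemma subset_stpt {x : X} {𝒰 : Set (Set X)} {W : Set X} (hW : W ∈ 𝒰) (hx : x ∈ W) :
    W ⊆ stpt x 𝒰 :=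
  fun _ hw => mem_stpt.2 ⟨W, hW, hx, hw⟩

lemma mem_stpt_self {𝒰 : Set (Set X)} (h𝒰 : ⋃₀ 𝒰 = univ) (x : X) : x ∈ stpt x 𝒰 := by
  obtain ⟨W, hW, hx⟩ := h𝒰.symm ▸ mem_univ x
  exact subset_stpt hW hx hx

variable [TopologicalSpace X]

lemma isClosed_setOf_stpt_subset {𝒰 : Set (Set X)} (h𝒰 : ∀ W ∈ 𝒰, IsOpen W) (V : Set X) :
    IsClosed {x | stpt x 𝒰 ⊆ V} := by
  have : {x | stpt x 𝒰 ⊆ V}ᶜ = ⋃₀ {W ∈ 𝒰 | ¬W ⊆ V} := by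
    ext x
    simp only [mem_compl_iff, mem_ofPred_eq, subset_def, mem_stpt, mem_sUnion]
    grind
  exact isOpen_compl_iff.1 (this ▸ isOpen_sUnion fun W hW => h𝒰 W hW.1)

lemma isClosed_nonIsolatedPoints : IsClosed (nonIsolatedPoints X) := by
  have : (nonIsolatedPoints X)ᶜ = ⋃ x ∈ {x : X | IsOpen {x}}, {x} := by
    ext; simp [nonIsolatedPoints]
  exact isOpen_compl_iff.1 (this ▸ isOpen_biUnion fun x hx => hx)

lemma closure_inter_subset_of_isClosed_subtype {S D : Set X} (hSD : S ⊆ D)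
    (hS : IsClosed {z : D | (z : X) ∈ S}) : closure S ∩ D ⊆ S := by
  rintro z ⟨hz, hzD⟩
  have hcl : (⟨z, hzD⟩ : D) ∈ closure {z : D | (z : X) ∈ S} := by
    rw [closure_subtype]
    convert hz
    ext w
    exact ⟨fun ⟨u, hu, hw⟩ => hw ▸ hu, fun hw => ⟨⟨w, hSD hw⟩, hw, rfl⟩⟩
  exact hS.closure_subset hcl

lemma isHereditarilyClosurePreservingIn_range {ι : Type*} {f : ι → Set X}
    (hf : LocallyFinite f) (D : Set X) : IsHereditarilyClosurePreservingIn (range f) D := by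
  intro H hH
  have hHf : LocallyFinite fun i => H (f i) := hf.subset fun i => hH _ (mem_range_self i)
  simp only [biUnion_range, hHf.closure_iUnion, iUnion_inter]

lemma isClosed_sUnion_of_isHereditarilyClosurePreservingIn {ℱ 𝒢 : Set (Set X)} {D : Set X}
    (hD : IsClosed D) (hℱD : ∀ S ∈ ℱ, S ⊆ D) (hℱ : ∀ S ∈ ℱ, IsClosed {z : D | (z : X) ∈ S})
    (hhcp : IsHereditarilyClosurePreservingIn ℱ D) (h𝒢 : 𝒢 ⊆ ℱ) : IsClosed (⋃₀ 𝒢) := by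
  classical
  have hunion : ⋃ S ∈ ℱ, (if S ∈ 𝒢 then S else ∅) = ⋃₀ 𝒢 := by
    ext z
    simp only [mem_iUnion, mem_sUnion, exists_prop]
    constructor
    · rintro ⟨S, -, hz⟩
      split_ifs at hz with hS
      exacts [⟨S, hS, hz⟩, hz.elim]
    · rintro ⟨S, hS, hz⟩
      exact ⟨S, h𝒢 hS, by rwa [if_pos hS]⟩
  have key := hhcp (fun S => if S ∈ 𝒢 then S else ∅) fun S _ => by split_ifs <;> simp
  rw [hunion] at key
  refine closure_subset_iff_isClosed.1 fun z hz => ?_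
  have hzD : z ∈ D := hD.closure_subset_iff.2 (sUnion_subset fun S hS => hℱD S (h𝒢 hS)) hz
  obtain ⟨S, hS, hzS, -⟩ : ∃ S ∈ ℱ, z ∈ closure (if S ∈ 𝒢 then S else ∅) ∧ z ∈ D := by
    have : z ∈ closure (⋃₀ 𝒢) ∩ D := ⟨hz, hzD⟩
    simpa only [key, mem_iUnion, exists_prop, mem_inter_iff] using this
  split_ifs at hzS with hS𝒢
  · exact ⟨S, hS𝒢, closure_inter_subset_of_isClosed_subtype (hℱD S hS) (hℱ S hS) ⟨hzS, hzD⟩⟩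
  · simp at hzS

end General

section FromDevelopment

variable {X : Type*}

def IsLeastMemContaining (𝒱 : Set (Set X)) (x : X) (V : Set X) : Prop :=
  V ∈ 𝒱 ∧ x ∈ V ∧ ∀ W ∈ 𝒱, x ∈ W → ¬WellOrderingRel W V

lemma exists_isLeastMemContaining {𝒱 : Set (Set X)} {x : X} (hx : x ∈ ⋃₀ 𝒱) :
    ∃ V, IsLeastMemContaining 𝒱 x V := by
  obtain ⟨V, ⟨hV, hxV⟩, hmin⟩ := WellOrderingRel.isWellOrder.wf.has_min {V ∈ 𝒱 | x ∈ V} hx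
  exact ⟨V, hV, hxV, fun W hW hxW => hmin W ⟨hW, hxW⟩⟩

lemma IsLeastMemContaining.eq {𝒱 : Set (Set X)} {y z : X} {V V₀ : Set X}
    (hV : IsLeastMemContaining 𝒱 y V) (hV₀ : IsLeastMemContaining 𝒱 z V₀) (hzV : z ∈ V)
    (hyV₀ : y ∈ V₀) : V = V₀ := by
  rcases trichotomous_of WellOrderingRel V V₀ with h | h | h
  · exact absurd h (hV₀.2.2 V hV.1 hzV)
  · exact h
  · exact absurd h (hV.2.2 V₀ hV₀.1 hyV₀)

variable [TopologicalSpace X]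

def developmentPiece (𝒰 : ℕ → Set (Set X)) (n m : ℕ) (V : Set X) : Set X :=
  {x ∈ nonIsolatedPoints X | stpt x (𝒰 m) ⊆ V} \ ⋃₀ {W ∈ 𝒰 n | WellOrderingRel W V}

def developmentPairs (𝒰 : ℕ → Set (Set X)) (j : ℕ) : Set (Set X × Set X) :=
  pairDiag X ∪ (fun V => (developmentPiece 𝒰 j.unpair.1 j.unpair.2 V, V)) '' 𝒰 j.unpair.1

variable {𝒰 : ℕ → Set (Set X)} {n m : ℕ} {V : Set X} {x : X}

lemma developmentPiece_subset_nonIsolatedPoints (n m : ℕ) (V : Set X) :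
    developmentPiece 𝒰 n m V ⊆ nonIsolatedPoints X :=
  fun _ hx => hx.1.1

lemma developmentPiece_subset (hcov : ⋃₀ 𝒰 m = univ) : developmentPiece 𝒰 n m V ⊆ V :=
  fun x hx => hx.1.2 (mem_stpt_self hcov x)

lemma isLeastMemContaining_of_mem_developmentPiece (hcov : ⋃₀ 𝒰 m = univ) (hV : V ∈ 𝒰 n)
    (hx : x ∈ developmentPiece 𝒰 n m V) : IsLeastMemContaining (𝒰 n) x V :=
  ⟨hV, developmentPiece_subset hcov hx, fun W hW hxW hWV => hx.2 ⟨W, ⟨hW, hWV⟩, hxW⟩⟩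

lemma isClosed_developmentPiece (h𝒰 : ∀ n, ∀ W ∈ 𝒰 n, IsOpen W) (n m : ℕ) (V : Set X) :
    IsClosed (developmentPiece 𝒰 n m V) :=
  (isClosed_nonIsolatedPoints.inter (isClosed_setOf_stpt_subset (h𝒰 m) V)).sdiff
    (isOpen_sUnion fun W hW => h𝒰 n W hW.1)

lemma exists_mem_developmentPiece (h𝒰 : IsDevelopmentAtNonIsolatedPoints 𝒰)
    (hx : x ∈ nonIsolatedPoints X) {U : Set X} (hxU : x ∈ U) (hU : IsOpen U) :
    ∃ n m V, V ∈ 𝒰 n ∧ x ∈ developmentPiece 𝒰 n m V ∧ V ⊆ U := by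
  obtain ⟨hopen, hcov, hstar⟩ := h𝒰
  obtain ⟨n, hn⟩ := hstar x hx U hxU hU
  obtain ⟨V, hV, hxV, hmin⟩ := exists_isLeastMemContaining (hcov n ▸ mem_univ x)
  obtain ⟨m, hm⟩ := hstar x hx V hxV (hopen n V hV)
  exact ⟨n, m, V, hV, ⟨⟨hx, hm⟩, fun ⟨W, ⟨hW, hWV⟩, hxW⟩ => hmin W hW hxW hWV⟩,
    (subset_stpt hV hxV).trans hn⟩

lemma mem_developmentPairs_pair (hV : V ∈ 𝒰 n) (m : ℕ) :
    (developmentPiece 𝒰 n m V, V) ∈ developmentPairs 𝒰 (Nat.pair n m) := by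
  simp only [developmentPairs, Nat.unpair_pair]
  exact Or.inr ⟨V, hV, rfl⟩

lemma singleton_mem_developmentPairs (hx : IsOpen {x}) (j : ℕ) :
    ({x}, {x}) ∈ developmentPairs 𝒰 j :=
  Or.inl ⟨x, hx, rfl⟩

lemma fst_subset_of_mem_developmentPairs_diff {P : Set X × Set X} {j : ℕ}
    (hP : P ∈ developmentPairs 𝒰 j \ pairDiag X) : P.1 ⊆ nonIsolatedPoints X := by
  obtain ⟨hP | ⟨V, -, rfl⟩, hPd⟩ := hP
  · exact absurd hP hPd
  · exact developmentPiece_subset_nonIsolatedPoints _ _ _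

lemma isClosed_fst_inter_of_mem_developmentPairs (h𝒰 : ∀ n, ∀ W ∈ 𝒰 n, IsOpen W)
    {P : Set X × Set X} {j : ℕ} (hP : P ∈ developmentPairs 𝒰 j) :
    IsClosed (P.1 ∩ nonIsolatedPoints X) := by
  rcases hP with ⟨x, hx, rfl⟩ | ⟨V, -, rfl⟩
  · convert isClosed_empty
    exact eq_empty_of_forall_notMem fun y ⟨hyx, hy⟩ => hy (mem_singleton_iff.1 hyx ▸ hx)
  · exact (isClosed_developmentPiece h𝒰 _ _ V).inter isClosed_nonIsolatedPoints

lemma locallyFinite_developmentPairs (h𝒰 : IsDevelopmentAtNonIsolatedPoints 𝒰) (j : ℕ) :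
    LocallyFinite fun P : developmentPairs 𝒰 j => (P : Set X × Set X).1 ∩ nonIsolatedPoints X := by
  obtain ⟨hopen, hcov, -⟩ := h𝒰
  intro z
  by_cases hz : z ∈ nonIsolatedPoints X
  · obtain ⟨V₀, hV₀⟩ := exists_isLeastMemContaining (hcov j.unpair.1 ▸ mem_univ z)
    obtain ⟨W, hW, hzW⟩ : z ∈ ⋃₀ 𝒰 j.unpair.2 := hcov _ ▸ mem_univ z
    refine ⟨V₀ ∩ W, ((hopen _ V₀ hV₀.1).inter (hopen _ W hW)).mem_nhds ⟨hV₀.2.1, hzW⟩,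
      ((finite_singleton (developmentPiece 𝒰 j.unpair.1 j.unpair.2 V₀, V₀)).preimage
        Subtype.val_injective.injOn).subset ?_⟩
    -- A piece meeting `V₀ ∩ W` at `y` belongs to a `V` containing `W ∋ z`; both `V` and `V₀`
    -- are then least members, for `y` and for `z`, so `V = V₀`.
    rintro ⟨P, hP⟩ ⟨y, ⟨hyP, hy⟩, hyV₀, hyW⟩
    rcases hP with ⟨t, ht, rfl⟩ | ⟨V, hV, rfl⟩
    · exact absurd (mem_singleton_iff.1 hyP ▸ ht) hy
    · have hzV : z ∈ V := hyP.1.2 (subset_stpt hW hyW hzW)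
      obtain rfl := (isLeastMemContaining_of_mem_developmentPiece (hcov _) hV hyP).eq hV₀ hzV hyV₀
      rfl
  · refine ⟨(nonIsolatedPoints X)ᶜ, isClosed_nonIsolatedPoints.isOpen_compl.mem_nhds hz,
      finite_empty.subset ?_⟩
    rintro P ⟨y, ⟨-, hy⟩, hyc⟩
    exact hyc hy

lemma isPairNetwork_developmentPairs (h𝒰 : IsDevelopmentAtNonIsolatedPoints 𝒰) :
    IsPairNetwork (⋃ j, developmentPairs 𝒰 j) := by
  refine ⟨fun P hP => ?_, fun x U hxU hU => ?_⟩
  · obtain ⟨j, hP⟩ := mem_iUnion.1 hP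
    rcases hP with ⟨t, -, rfl⟩ | ⟨V, -, rfl⟩
    exacts [subset_rfl, developmentPiece_subset (h𝒰.2.1 _)]
  · by_cases hx : x ∈ nonIsolatedPoints X
    · obtain ⟨n, m, V, hV, hxV, hVU⟩ := exists_mem_developmentPiece h𝒰 hx hxU hU
      exact ⟨_, mem_iUnion.2 ⟨_, mem_developmentPairs_pair hV m⟩, hxV, hVU⟩
    · exact ⟨_, mem_iUnion.2 ⟨0, singleton_mem_developmentPairs (not_not.1 hx) 0⟩, rfl,
        singleton_subset_iff.2 hxU⟩

lemma pairSt_developmentPairs_pair (hcov : ∀ n, ⋃₀ 𝒰 n = univ) (hV : V ∈ 𝒰 n)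
    (hx : x ∈ developmentPiece 𝒰 n m V) : pairSt x (developmentPairs 𝒰 (Nat.pair n m)) = V := by
  have hxV := isLeastMemContaining_of_mem_developmentPiece (hcov m) hV hx
  refine Subset.antisymm (fun w hw => ?_)
    fun w hw => mem_pairSt.2 ⟨_, mem_developmentPairs_pair hV m, hx, hw⟩
  obtain ⟨P, hP, hxP, hwP⟩ := mem_pairSt.1 hw
  simp only [developmentPairs, Nat.unpair_pair] at hP
  rcases hP with ⟨t, ht, rfl⟩ | ⟨V', hV', rfl⟩
  · exact absurd (mem_singleton_iff.1 hxP ▸ ht) hx.1.1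
  · rwa [(isLeastMemContaining_of_mem_developmentPiece (hcov m) hV' hxP).eq hxV
      (developmentPiece_subset (hcov m) hxP) hxV.2.1] at hwP

lemma pairSt_developmentPairs_of_isOpen_singleton (hx : IsOpen {x}) (j : ℕ) :
    pairSt x (developmentPairs 𝒰 j) = {x} := by
  refine Subset.antisymm (fun w hw => ?_)
    fun w hw => mem_pairSt.2 ⟨_, singleton_mem_developmentPairs hx j, rfl, hw⟩
  obtain ⟨P, hP, hxP, hwP⟩ := mem_pairSt.1 hw
  rcases hP with ⟨t, -, rfl⟩ | ⟨V, -, rfl⟩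
  · rwa [mem_singleton_iff.1 hxP]
  · exact absurd hx (developmentPiece_subset_nonIsolatedPoints _ _ _ hxP)

lemma exists_interior_pairSt_developmentPairs_subset (h𝒰 : IsDevelopmentAtNonIsolatedPoints 𝒰)
    {U : Set X} (hxU : x ∈ U) (hU : IsOpen U) :
    ∃ j, x ∈ interior (pairSt x (developmentPairs 𝒰 j)) ∧
      interior (pairSt x (developmentPairs 𝒰 j)) ⊆ U := by
  by_cases hx : x ∈ nonIsolatedPoints X
  · obtain ⟨n, m, V, hV, hxV, hVU⟩ := exists_mem_developmentPiece h𝒰 hx hxU hU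
    refine ⟨Nat.pair n m, ?_⟩
    rw [pairSt_developmentPairs_pair h𝒰.2.1 hV hxV, (h𝒰.1 n V hV).interior_eq]
    exact ⟨developmentPiece_subset (h𝒰.2.1 m) hxV, hVU⟩
  · have hxo : IsOpen {x} := not_not.1 hx
    refine ⟨0, ?_⟩
    rw [pairSt_developmentPairs_of_isOpen_singleton hxo, hxo.interior_eq]
    exact ⟨rfl, singleton_subset_iff.2 hxU⟩

end FromDevelopment

section FromPairNetwork

variable {X : Type*}

def familyNhd (ℱ : Set (Set X)) (x : X) : Set X := {y | ∀ S ∈ ℱ, y ∈ S → x ∈ S}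

lemma pairSt_subset_of_mem_familyNhd {𝒩 : Set (Set X × Set X)} {D : Set X} {x y : X}
    (hy : y ∈ D) (hxy : y ∈ familyNhd (firstCoordRestrict 𝒩 D) x) :
    pairSt y 𝒩 ⊆ pairSt x 𝒩 := by
  intro w hw
  obtain ⟨P, hP, hyP, hwP⟩ := mem_pairSt.1 hw
  exact mem_pairSt.2 ⟨P, hP, (hxy _ ⟨P, hP, rfl⟩ ⟨hyP, hy⟩).1, hwP⟩

variable [TopologicalSpace X]

lemma isOpen_familyNhd {ℱ : Set (Set X)} {D : Set X} (hD : IsClosed D) (hℱD : ∀ S ∈ ℱ, S ⊆ D)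
    (hℱ : ∀ S ∈ ℱ, IsClosed {z : D | (z : X) ∈ S}) (hhcp : IsHereditarilyClosurePreservingIn ℱ D)
    (x : X) : IsOpen (familyNhd ℱ x) := by
  have : familyNhd ℱ x = (⋃₀ {S ∈ ℱ | x ∉ S})ᶜ := by
    ext y
    simp only [familyNhd, mem_ofPred_eq, mem_compl_iff, mem_sUnion]
    grind
  rw [this, isOpen_compl_iff]
  exact isClosed_sUnion_of_isHereditarilyClosurePreservingIn hD hℱD hℱ hhcp (sep_subset _ _)

lemma isOpen_familyNhd_firstCoordRestrict {𝒩 : Set (Set X × Set X)} {D : Set X}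
    (hD : IsClosed D) (hcl : ∀ S ∈ firstCoordRestrict 𝒩 D, IsClosed {z : D | (z : X) ∈ S})
    (hhcp : IsHereditarilyClosurePreservingIn (firstCoordRestrict 𝒩 D) D) (x : X) :
    IsOpen (familyNhd (firstCoordRestrict 𝒩 D) x) :=
  isOpen_familyNhd hD (by rintro _ ⟨P, -, rfl⟩; exact inter_subset_right) hcl hhcp x

open Classical in
def gFunOfPairFamily (𝒩 : ℕ → Set (Set X × Set X)) (n : ℕ) (x : X) : Set X :=
  ⋂ i ∈ Finset.range (n + 1),
    familyNhd (firstCoordRestrict (𝒩 i) (nonIsolatedPoints X)) x ∩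
      if x ∈ interior (pairSt x (𝒩 i)) then interior (pairSt x (𝒩 i)) else univ

variable {𝒩 : ℕ → Set (Set X × Set X)}

lemma mem_gFunOfPairFamily_self (n : ℕ) (x : X) : x ∈ gFunOfPairFamily 𝒩 n x := by
  refine mem_iInter₂.2 fun i _ => ⟨fun _ _ hx => hx, ?_⟩
  split_ifs with hx
  exacts [hx, mem_univ x]

lemma gFunOfPairFamily_subset_familyNhd {i n : ℕ} (hin : i ≤ n) (x : X) :
    gFunOfPairFamily 𝒩 n x ⊆ familyNhd (firstCoordRestrict (𝒩 i) (nonIsolatedPoints X)) x :=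
  fun _ hy => (mem_iInter₂.1 hy i (Finset.mem_range_succ_iff.2 hin)).1

lemma gFunOfPairFamily_subset_interior {i n : ℕ} (hin : i ≤ n) {x : X}
    (hx : x ∈ interior (pairSt x (𝒩 i))) : gFunOfPairFamily 𝒩 n x ⊆ interior (pairSt x (𝒩 i)) := by
  intro y hy
  have := (mem_iInter₂.1 hy i (Finset.mem_range_succ_iff.2 hin)).2
  rwa [if_pos hx] at this

lemma isOpen_gFunOfPairFamily
    (hii : ∀ n, ∀ S ∈ firstCoordRestrict (𝒩 n) (nonIsolatedPoints X),
      IsClosed {z : ↥(nonIsolatedPoints X) | (z : X) ∈ S})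
    (hhcp : ∀ n, IsHereditarilyClosurePreservingIn
      (firstCoordRestrict (𝒩 n) (nonIsolatedPoints X)) (nonIsolatedPoints X))
    (n : ℕ) (x : X) : IsOpen (gFunOfPairFamily 𝒩 n x) := by
  refine isOpen_biInter_finset fun i _ => IsOpen.inter ?_ ?_
  · exact isOpen_familyNhd_firstCoordRestrict isClosed_nonIsolatedPoints (hii i) (hhcp i) x
  · split_ifs
    exacts [isOpen_interior, isOpen_univ]

lemma exists_gFunOfPairFamily_subset (hnet : IsPairNetwork (⋃ n, 𝒩 n))
    (hii : ∀ n, ∀ S ∈ firstCoordRestrict (𝒩 n) (nonIsolatedPoints X),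
      IsClosed {z : ↥(nonIsolatedPoints X) | (z : X) ∈ S})
    (hhcp : ∀ n, IsHereditarilyClosurePreservingIn
      (firstCoordRestrict (𝒩 n) (nonIsolatedPoints X)) (nonIsolatedPoints X))
    (hiii : ∀ (x : X) (U : Set X), x ∈ U → IsOpen U →
      ∃ m, x ∈ interior (pairSt x (𝒩 m)) ∧ interior (pairSt x (𝒩 m)) ⊆ U)
    {z : X} (hz : z ∈ nonIsolatedPoints X) {U : Set X} (hzU : z ∈ U) (hU : IsOpen U) :
    ∃ n, ∀ x, z ∈ gFunOfPairFamily 𝒩 n x → gFunOfPairFamily 𝒩 n x ⊆ U := by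
  obtain ⟨m, hzm, hmU⟩ := hiii z U hzU hU
  have hO : IsOpen (interior (pairSt z (𝒩 m)) ∩
      familyNhd (firstCoordRestrict (𝒩 m) (nonIsolatedPoints X)) z) :=
    isOpen_interior.inter
      (isOpen_familyNhd_firstCoordRestrict isClosed_nonIsolatedPoints (hii m) (hhcp m) z)
  obtain ⟨P, hP, hzP, hPO⟩ := hnet.2 z _ (mem_inter hzm fun _ _ h => h) hO
  obtain ⟨k, hPk⟩ := mem_iUnion.1 hP
  refine ⟨max m k, fun x hzx => ?_⟩
  obtain ⟨hxP, hx⟩ : x ∈ P.1 ∩ nonIsolatedPoints X :=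
    gFunOfPairFamily_subset_familyNhd (le_max_right m k) x hzx _ ⟨P, hPk, rfl⟩ ⟨hzP, hz⟩
  obtain ⟨hxint, hzx'⟩ := hPO (hnet.1 P hP hxP)
  have hst : pairSt x (𝒩 m) = pairSt z (𝒩 m) :=
    (pairSt_subset_of_mem_familyNhd hx hzx').antisymm (pairSt_subset_of_mem_familyNhd hz
      (gFunOfPairFamily_subset_familyNhd (le_max_left m k) x hzx))
  rw [← hst] at hxint hmU
  exact (gFunOfPairFamily_subset_interior (le_max_left m k) hxint).trans hmU

lemma isDevelopmentAtNonIsolatedPoints_range {g : ℕ → X → Set X}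
    (hopen : ∀ n x, IsOpen (g n x)) (hmem : ∀ n x, x ∈ g n x)
    (hsmall : ∀ z ∈ nonIsolatedPoints X, ∀ U : Set X, z ∈ U → IsOpen U →
      ∃ n, ∀ x, z ∈ g n x → g n x ⊆ U) :
    IsDevelopmentAtNonIsolatedPoints fun n => range (g n) := by
  refine ⟨?_, fun n => eq_univ_of_forall fun x => ⟨g n x, mem_range_self x, hmem n x⟩, ?_⟩
  · rintro n _ ⟨x, rfl⟩
    exact hopen n x
  · intro z hz U hzU hU
    obtain ⟨n, hn⟩ := hsmall z hz U hzU hU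
    refine ⟨n, fun w hw => ?_⟩
    obtain ⟨_, ⟨x, rfl⟩, hzx, hwx⟩ := mem_stpt.1 hw
    exact hn x hzx hwx

end FromPairNetwork

theorem corollary_2_4_general {X : Type*} [TopologicalSpace X] :
    (∃ 𝒰 : ℕ → Set (Set X), IsDevelopmentAtNonIsolatedPoints 𝒰) ↔
      ∃ 𝒰 : ℕ → Set (Set X × Set X),
        IsPairNetwork (⋃ n, 𝒰 n) ∧
        (∀ n, pairDiag X ⊆ 𝒰 n ∧
          ∀ P ∈ 𝒰 n \ pairDiag X, P.1 ⊆ nonIsolatedPoints X) ∧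
        (∀ n, (∀ S ∈ firstCoordRestrict (𝒰 n) (nonIsolatedPoints X),
            IsClosed {z : ↥(nonIsolatedPoints X) | (z : X) ∈ S}) ∧
          IsHereditarilyClosurePreservingIn
            (firstCoordRestrict (𝒰 n) (nonIsolatedPoints X)) (nonIsolatedPoints X)) ∧
        (∀ (x : X) (U : Set X), x ∈ U → IsOpen U →
          ∃ m, x ∈ interior (pairSt x (𝒰 m)) ∧ interior (pairSt x (𝒰 m)) ⊆ U) := by
  constructor
  · rintro ⟨𝒰, h𝒰⟩
    refine ⟨developmentPairs 𝒰, isPairNetwork_developmentPairs h𝒰,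
      fun j => ⟨subset_union_left, fun P hP => fst_subset_of_mem_developmentPairs_diff hP⟩,
      fun j => ⟨?_, ?_⟩, fun x U hxU hU => exists_interior_pairSt_developmentPairs_subset h𝒰 hxU hU⟩
    · rintro _ ⟨P, hP, rfl⟩
      exact (isClosed_fst_inter_of_mem_developmentPairs h𝒰.1 hP).preimage continuous_subtype_val
    · rw [firstCoordRestrict, image_eq_range]
      exact isHereditarilyClosurePreservingIn_range (locallyFinite_developmentPairs h𝒰 j) _
  · rintro ⟨𝒩, hnet, -, hii, hiii⟩
    exact ⟨fun n => range (gFunOfPairFamily 𝒩 n), isDevelopmentAtNonIsolatedPoints_range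
      (isOpen_gFunOfPairFamily (fun n => (hii n).1) fun n => (hii n).2) mem_gFunOfPairFamily_self
      fun z hz U hzU hU => exists_gFunOfPairFamily_subset hnet (fun n => (hii n).1)
        (fun n => (hii n).2) hiii hz hzU hU⟩

/-- Corollary 2.4: `X` is developable at non-isolated points iff `X` has a
pair-network `⋃ₙ 𝒰ₙ` satisfying conditions (i)-(iii). -/
theorem corollary_2_4 {X : Type*} [TopologicalSpace X] [T2Space X] :
    (∃ 𝒰 : ℕ → Set (Set X), IsDevelopmentAtNonIsolatedPoints 𝒰) ↔
      ∃ 𝒰 : ℕ → Set (Set X × Set X),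
        IsPairNetwork (⋃ n, 𝒰 n) ∧
        (∀ n, pairDiag X ⊆ 𝒰 n ∧
          ∀ P ∈ 𝒰 n \ pairDiag X, P.1 ⊆ nonIsolatedPoints X) ∧
        (∀ n, (∀ S ∈ firstCoordRestrict (𝒰 n) (nonIsolatedPoints X),
            IsClosed {z : ↥(nonIsolatedPoints X) | (z : X) ∈ S}) ∧
          IsHereditarilyClosurePreservingIn
            (firstCoordRestrict (𝒰 n) (nonIsolatedPoints X)) (nonIsolatedPoints X)) ∧
        (∀ (x : X) (U : Set X), x ∈ U → IsOpen U →
          ∃ m, x ∈ interior (pairSt x (𝒰 m)) ∧ interior (pairSt x (𝒰 m)) ⊆ U) :=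
  corollary_2_4_general
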